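/- Let X be a set and S an arbitrary (not necessarily finite) subset of the free monoid ⟨X⟩. Then there is exactly one overlap-free subset T ⊆ ⟨X⟩\{1} which is inverse-equivalent to S, namely the set of nonidentity elements w of ⟨X⟩ which become invertible in ⟨X : i(S)⟩ but admit no factorization into two nonidentity elements of ⟨X⟩ that become invertible in ⟨X : i(S)⟩. -/

import Mathlib

/-!
The indecomposable units `D` (nonidentity `w ∈ ⟨X⟩` invertible in `⟨X : i(S)⟩` and not a product
of two such) generate every `w` that becomes invertible, by induction on length, so `S` and `D`
are inverse-equivalent. `D` is overlap-free: if `ab` and `bc` are invertible, then `b` has a left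
and a right inverse, so `b`, hence `a` and `c`, are invertible, against indecomposability.

For uniqueness, an overlap-free `T` inverse-equivalent to `S` has the same invertible elements of
`⟨X⟩`, so it suffices that these are generated by `T`; a generating overlap-free set not containing
`1` is then forced to be `D`. Present `⟨X : i(T)⟩` by the rewriting system deleting the factors
`t i(t)` and `i(t) t`: since `T` is overlap-free, two such factors overlap only when they are
`t i(t)` and `i(t) t` overlapping in `t` or `i(t)`, with equal reducts, so the system is confluent
and a nonempty irreducible word is never `1`. This lets an induction on length peel off the
elements of `T` of an invertible `w ∈ ⟨X⟩` one suffix at a time.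
-/

namespace AdjoinInverses

variable {X : Type*}

/-- The embedding of the free monoid on `X` into the free monoid on `X ⊕ S`. -/
def emb (S : Set (FreeMonoid X)) : FreeMonoid X →* FreeMonoid (X ⊕ S) :=
  FreeMonoid.map Sum.inl

/-- The generator `i(w)` corresponding to `w ∈ S`. -/
def igen (S : Set (FreeMonoid X)) (w : S) : FreeMonoid (X ⊕ S) :=
  FreeMonoid.of (Sum.inr w)

/-- The defining relations `w ⬝ i(w) = 1` and `i(w) ⬝ w = 1` for `w ∈ S`. -/
inductive InvRel (S : Set (FreeMonoid X)) : FreeMonoid (X ⊕ S) → FreeMonoid (X ⊕ S) → Prop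
  | mul_inv (w : S) : InvRel S (emb S w.1 * igen S w) 1
  | inv_mul (w : S) : InvRel S (igen S w * emb S w.1) 1

/-- The congruence generated by the defining relations. -/
def invCon (S : Set (FreeMonoid X)) : Con (FreeMonoid (X ⊕ S)) := conGen (InvRel S)

/-- The monoid `⟨X : i(S)⟩` obtained from the free monoid on `X` by universally
adjoining a two-sided inverse to each element of `S`. -/
def AdjInv (S : Set (FreeMonoid X)) : Type _ := (invCon S).Quotient

instance (S : Set (FreeMonoid X)) : Monoid (AdjInv S) := Con.monoid _

/-- The natural homomorphism `⟨X⟩ → ⟨X : i(S)⟩`. -/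
def natHom (S : Set (FreeMonoid X)) : FreeMonoid X →* AdjInv S :=
  ((invCon S).mk').comp (emb S)

/-- The adjoined inverse `i(w)`, as an element of `⟨X : i(S)⟩`. -/
def invElt (S : Set (FreeMonoid X)) (w : S) : AdjInv S :=
  (invCon S).mk' (igen S w)

/-- `S` and `S'` are inverse-equivalent: each element of `S'` becomes invertible in
`⟨X : i(S)⟩` and each element of `S` becomes invertible in `⟨X : i(S')⟩`. -/
def InvEquiv (S S' : Set (FreeMonoid X)) : Prop :=
  (∀ w ∈ S', IsUnit (natHom S w)) ∧ ∀ w ∈ S, IsUnit (natHom S' w)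

/-- Two (nonidentity) elements of the free monoid overlap: one can be written `a*b`
and the other `b*c` with `b ≠ 1` and at most one of `a`, `c` equal to `1`. -/
def Overlap (u v : FreeMonoid X) : Prop :=
  ∃ a b c : FreeMonoid X, b ≠ 1 ∧ (a ≠ 1 ∨ c ≠ 1) ∧ u = a * b ∧ v = b * c

/-- A set `T` is overlap-free if no pair of elements of `T` (distinct or not) overlap. -/
def OverlapFree (T : Set (FreeMonoid X)) : Prop :=
  ∀ u ∈ T, ∀ v ∈ T, ¬ Overlap u v

theorem List.eq_append_of_append_singleton_eq {α : Type*} {x a b : List α} {y : α}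
    (h : x ++ [y] = a ++ b) (hb : b ≠ []) : ∃ b₀, x = a ++ b₀ ∧ b = b₀ ++ [y] := by
  obtain ⟨b₀, z, rfl⟩ := (List.eq_nil_or_concat' b).resolve_left hb
  rw [← List.append_assoc] at h
  obtain ⟨rfl, hyz⟩ := List.append_inj' h rfl
  exact ⟨b₀, rfl, by rw [hyz]⟩

theorem List.eq_of_append_cons_eq {α : Type*} {x y x' y' : List α} {a a' : α}
    (hx : a' ∉ x) (hy : a' ∉ y) (h : x ++ a :: y = x' ++ a' :: y') :
    x = x' ∧ a = a' ∧ y = y' := by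
  rcases List.append_eq_append_iff.1 h with ⟨m, rfl, hm⟩ | ⟨m, rfl, hm⟩
  · cases m with
    | nil => simpa using hm
    | cons b m => simp only [List.cons_append, List.cons.injEq] at hm; simp [hm.2] at hy
  · cases m with
    | nil => simpa using hm.symm
    | cons b m => simp only [List.cons_append, List.cons.injEq] at hm; simp [← hm.1] at hx

theorem isUnit_of_isUnit_mul_of_isUnit_mul {M : Type*} [Monoid M] {a b c : M}
    (hab : IsUnit (a * b)) (hbc : IsUnit (b * c)) : IsUnit b := by
  obtain ⟨x, -, hx⟩ := isUnit_iff_exists.1 hab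
  obtain ⟨y, hy, -⟩ := isUnit_iff_exists.1 hbc
  exact isUnit_iff_exists_and_exists.2
    ⟨⟨c * y, by rw [← mul_assoc, hy]⟩, ⟨x * a, by rw [mul_assoc, hx]⟩⟩

theorem mul_eq_one_of_mul_mul_mul_eq_one {M : Type*} [Monoid M] {p a b q : M} (hab : a * b = 1)
    (h₁ : p * a * (b * q) = 1) (h₂ : b * q * (p * a) = 1) :
    p * q = 1 ∧ q * p = 1 ∧ b * a = 1 := by
  have hqp : q * p = 1 :=
    calc q * p = a * b * (q * p) * (a * b) := by rw [hab, one_mul, mul_one]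
      _ = a * (b * q * (p * a)) * b := by simp only [mul_assoc]
      _ = 1 := by rw [h₂, mul_one, hab]
  refine ⟨?_, hqp, ?_⟩
  · rwa [mul_assoc, ← mul_assoc a b q, hab, one_mul] at h₁
  · rwa [mul_assoc, ← mul_assoc q p a, hqp, one_mul] at h₂

theorem Submonoid.exists_mul_of_mem_closure {M : Type*} [Monoid M] {T : Set M} {w : M}
    (hw : w ∈ Submonoid.closure T) (h1 : w ≠ 1) :
    ∃ t ∈ T, ∃ r ∈ Submonoid.closure T, w = t * r := by
  obtain ⟨l, hlT, rfl⟩ := Submonoid.exists_list_of_mem_closure hw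
  cases l with
  | nil => exact absurd List.prod_nil h1
  | cons t l =>
    exact ⟨t, hlT t List.mem_cons_self, l.prod,
      Submonoid.list_prod_mem _ fun x hx => Submonoid.subset_closure (hlT x (by simp [hx])),
      List.prod_cons⟩

theorem isUnit_of_mem_closure {N M : Type*} [Monoid N] [Monoid M] {f : N →* M} {T : Set N}
    (hT : ∀ t ∈ T, IsUnit (f t)) {w : N} (hw : w ∈ Submonoid.closure T) : IsUnit (f w) :=
  Submonoid.closure_le (S := (IsUnit.submonoid M).comap f) |>.2 hT hw

section UniversalProperty

variable {S : Set (FreeMonoid X)}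

theorem isUnit_natHom_of_mem {w : FreeMonoid X} (hw : w ∈ S) : IsUnit (natHom S w) :=
  isUnit_iff_exists.2 ⟨invElt S ⟨w, hw⟩,
    (Con.eq _).2 (ConGen.Rel.of _ _ (InvRel.mul_inv ⟨w, hw⟩)),
    (Con.eq _).2 (ConGen.Rel.of _ _ (InvRel.inv_mul ⟨w, hw⟩))⟩

variable {M : Type*} [Monoid M]

noncomputable def AdjInv.lift (f : FreeMonoid X →* M) (hf : ∀ s ∈ S, IsUnit (f s)) :
    AdjInv S →* M :=
  (invCon S).lift
    (FreeMonoid.lift (Sum.elim (f ∘ FreeMonoid.of) fun s => ↑(hf s s.2).unit⁻¹)) <| by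
    have hemb : (FreeMonoid.lift (Sum.elim (f ∘ FreeMonoid.of)
        fun s : S => ↑(hf s s.2).unit⁻¹)).comp (emb S) = f := FreeMonoid.hom_eq fun _ => rfl
    refine Con.conGen_le.2 ?_
    rintro _ _ (⟨s⟩ | ⟨s⟩) <;> simp [Con.ker_rel, ← MonoidHom.comp_apply, hemb, igen]

theorem AdjInv.lift_natHom (f : FreeMonoid X →* M) (hf : ∀ s ∈ S, IsUnit (f s))
    (w : FreeMonoid X) : AdjInv.lift f hf (natHom S w) = f w :=
  DFunLike.congr_fun (FreeMonoid.hom_eq (f := (AdjInv.lift f hf).comp (natHom S)) (g := f)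
    fun _ => rfl) w

theorem isUnit_natHom_of_isUnit {S' : Set (FreeMonoid X)} (h : ∀ s ∈ S, IsUnit (natHom S' s))
    {w : FreeMonoid X} (hw : IsUnit (natHom S w)) : IsUnit (natHom S' w) :=
  AdjInv.lift_natHom (natHom S') h w ▸ hw.map _

end UniversalProperty

section IndecomposableUnits

variable {M : Type*} [Monoid M] (f : FreeMonoid X →* M)

def indecomposableUnits : Set (FreeMonoid X) :=
  {w | w ≠ 1 ∧ IsUnit (f w) ∧ ¬∃ u v : FreeMonoid X, u ≠ 1 ∧ v ≠ 1 ∧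
    IsUnit (f u) ∧ IsUnit (f v) ∧ w = u * v}

variable {f}

theorem overlapFree_indecomposableUnits : OverlapFree (indecomposableUnits f) := by
  rintro _ ⟨-, hab, hab_min⟩ _ ⟨-, hbc, hbc_min⟩ ⟨a, b, c, hb, hac, rfl, rfl⟩
  rw [map_mul] at hab hbc
  have hb_unit := isUnit_of_isUnit_mul_of_isUnit_mul hab hbc
  rcases hac with ha | hc
  · exact hab_min ⟨a, b, ha, hb, (hb_unit.mul_right_iff).1 hab, hb_unit, rfl⟩
  · exact hbc_min ⟨b, c, hb, hc, hb_unit, (hb_unit.mul_left_iff).1 hbc, rfl⟩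

theorem mem_closure_indecomposableUnits {w : FreeMonoid X} (hw : IsUnit (f w)) :
    w ∈ Submonoid.closure (indecomposableUnits f) := by
  induction hn : w.length using Nat.strong_induction_on generalizing w with
  | _ n ih =>
    by_cases h1 : w = 1
    · exact h1 ▸ one_mem _
    by_cases hdec : ∃ u v : FreeMonoid X, u ≠ 1 ∧ v ≠ 1 ∧ IsUnit (f u) ∧ IsUnit (f v) ∧ w = u * v
    · obtain ⟨u, v, hu, hv, hfu, hfv, rfl⟩ := hdec
      have hlu := FreeMonoid.length_eq_zero.not.2 hu
      have hlv := FreeMonoid.length_eq_zero.not.2 hv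
      rw [FreeMonoid.length_mul] at hn
      exact mul_mem (ih _ (by omega) hfu rfl) (ih _ (by omega) hfv rfl)
    · exact Submonoid.subset_closure ⟨h1, hw, hdec⟩

theorem eq_indecomposableUnits {T : Set (FreeMonoid X)} (h1 : (1 : FreeMonoid X) ∉ T)
    (hT : OverlapFree T) (hTf : ∀ t ∈ T, IsUnit (f t))
    (hgen : ∀ w, IsUnit (f w) → w ∈ Submonoid.closure T) : T = indecomposableUnits f := by
  ext w
  constructor
  · intro hw
    refine ⟨ne_of_mem_of_not_mem hw h1, hTf w hw, ?_⟩
    rintro ⟨u, v, hu, hv, hfu, -, rfl⟩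
    obtain ⟨t, ht, r, -, rfl⟩ := Submonoid.exists_mul_of_mem_closure (hgen u hfu) hu
    refine hT t ht _ hw ⟨1, t, r * v, ne_of_mem_of_not_mem ht h1, Or.inr ?_, (one_mul t).symm,
      mul_assoc t r v⟩
    exact fun h => hv (eq_one_of_mul_left' h)
  · rintro ⟨hw1, hfw, hw_min⟩
    obtain ⟨t, ht, r, hr, rfl⟩ := Submonoid.exists_mul_of_mem_closure (hgen w hfw) hw1
    by_cases hr1 : r = 1
    · rwa [hr1, mul_one]
    · exact absurd ⟨t, r, ne_of_mem_of_not_mem ht h1, hr1, hTf t ht,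
        isUnit_of_mem_closure hTf hr, rfl⟩ hw_min

end IndecomposableUnits

theorem OverlapFree.eq_nil_of_toList_eq {T : Set (FreeMonoid X)} (hT : OverlapFree T)
    {t s : FreeMonoid X} (ht : t ∈ T) (hs : s ∈ T) {a b c : List X}
    (htl : t.toList = a ++ b) (hsl : s.toList = b ++ c) (hb : b ≠ []) : a = [] ∧ c = [] := by
  have hne : ∀ {l : List X}, l ≠ [] → FreeMonoid.ofList l ≠ 1 :=
    fun hl h => hl (congrArg FreeMonoid.toList h)
  by_contra hac
  refine hT t ht s hs ⟨.ofList a, .ofList b, .ofList c, hne hb, ?_,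
    FreeMonoid.toList.injective htl, FreeMonoid.toList.injective hsl⟩
  rcases not_and_or.1 hac with ha | hc
  exacts [Or.inl (hne ha), Or.inr (hne hc)]

section Rewriting

open Relation

variable (T : Set (FreeMonoid X))

def word (w : FreeMonoid X) : List (X ⊕ T) := w.toList.map Sum.inl

/-- The redexes `t i(t)` and `i(t) t` of the rewriting system presenting `⟨X : i(T)⟩`, whose
steps delete one redex. -/
inductive IsRule : List (X ⊕ T) → Prop
  | mul_inv (t : T) : IsRule (word T t ++ [Sum.inr t])
  | inv_mul (t : T) : IsRule (Sum.inr t :: word T t)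

def Step (u v : List (X ⊕ T)) : Prop :=
  ∃ p l q, IsRule T l ∧ u = p ++ l ++ q ∧ v = p ++ q

def IsNormal (u : List (X ⊕ T)) : Prop :=
  ∀ v, ¬Step T u v

def toAdjInv (u : List (X ⊕ T)) : AdjInv T :=
  (invCon T).mk' (FreeMonoid.ofList u)

variable {T}

theorem toAdjInv_append (u v : List (X ⊕ T)) :
    toAdjInv T (u ++ v) = toAdjInv T u * toAdjInv T v :=
  map_mul _ _ _

theorem natHom_eq_toAdjInv (w : FreeMonoid X) : natHom T w = toAdjInv T (word T w) :=
  rfl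

theorem length_word (w : FreeMonoid X) : (word T w).length = w.length :=
  List.length_map _

theorem inr_notMem_word (s : T) (w : FreeMonoid X) : Sum.inr s ∉ word T w := by
  simp [word]

theorem IsRule.toAdjInv_eq_one {l : List (X ⊕ T)} (hl : IsRule T l) : toAdjInv T l = 1 := by
  cases hl with
  | mul_inv t => exact (Con.eq _).2 (ConGen.Rel.of _ _ (InvRel.mul_inv t))
  | inv_mul t => exact (Con.eq _).2 (ConGen.Rel.of _ _ (InvRel.inv_mul t))

theorem IsRule.exists_inr_mem {l : List (X ⊕ T)} (hl : IsRule T l) : ∃ s, Sum.inr s ∈ l := by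
  cases hl with
  | mul_inv t => exact ⟨t, by simp⟩
  | inv_mul t => exact ⟨t, by simp⟩

theorem IsRule.length_eq {l : List (X ⊕ T)} (hl : IsRule T l) {s : T} (hs : Sum.inr s ∈ l) :
    l.length = (s : FreeMonoid X).length + 1 := by
  cases hl with
  | mul_inv t =>
    obtain rfl : s = t := by simpa [word] using hs
    simp [length_word]
  | inv_mul t =>
    obtain rfl : s = t := by simpa [word] using hs
    simp [length_word]

theorem IsRule.ne_nil {l : List (X ⊕ T)} (hl : IsRule T l) : l ≠ [] := by
  obtain ⟨s, hs⟩ := hl.exists_inr_mem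
  exact List.ne_nil_of_mem hs

theorem IsRule.eq_nil_of_eq_append {l l' a c : List (X ⊕ T)} (hl : IsRule T l) (hl' : IsRule T l')
    (h : l = a ++ l' ++ c) : a = [] ∧ c = [] := by
  obtain ⟨s, hs⟩ := hl'.exists_inr_mem
  have hlen := hl.length_eq (s := s) (by simp [h, hs])
  rw [h, List.length_append, List.length_append, hl'.length_eq hs] at hlen
  exact ⟨List.eq_nil_of_length_eq_zero (by omega), List.eq_nil_of_length_eq_zero (by omega)⟩

/-- Two rules of an overlap-free set can only overlap as `t i(t)` and `i(t) t` do, along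
`i(t)` or `t`; in either case the two reducts agree. -/
theorem IsRule.eq_of_overlap (hT : OverlapFree T) {l l' a b c : List (X ⊕ T)}
    (hl : IsRule T l) (hl' : IsRule T l') (h : l = a ++ b) (h' : l' = b ++ c) (hb : b ≠ []) :
    a = c := by
  by_cases ha : a = []
  · subst ha
    rw [(hl'.eq_nil_of_eq_append hl (a := []) (c := c) (by simp [h, h'])).2]
  by_cases hc : c = []
  · subst hc
    rw [(hl.eq_nil_of_eq_append hl' (a := a) (c := []) (by simp [h, h'])).1]
  cases hl with
  | mul_inv t =>
    obtain ⟨b₀, hab₀, rfl⟩ := List.eq_append_of_append_singleton_eq h hb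
    cases hl' with
    | mul_inv s =>
      obtain ⟨c₀, hc₀, -⟩ := List.eq_append_of_append_singleton_eq h' hc
      exact absurd (by simp [hc₀]) (inr_notMem_word t s)
    | inv_mul s =>
      cases b₀ with
      | cons y b₀ =>
        obtain ⟨rfl, -⟩ := List.cons_eq_cons.1 h'
        exact absurd (by simp [hab₀]) (inr_notMem_word s t)
      | nil =>
        obtain ⟨hst, hc⟩ := List.cons_eq_cons.1 h'
        obtain rfl := Sum.inr_injective hst
        simpa using hab₀.symm.trans hc
  | inv_mul t =>
    obtain ⟨a₀, rfl, hta⟩ := (List.cons_eq_append_iff.1 h).resolve_left (fun h => ha h.1)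
    cases hl' with
    | inv_mul s =>
      obtain ⟨b₀, rfl, -⟩ := (List.cons_eq_append_iff.1 h').resolve_left (fun h => hb h.1)
      exact absurd (by simp [hta]) (inr_notMem_word s t)
    | mul_inv s =>
      obtain ⟨c₀, hsc, rfl⟩ := List.eq_append_of_append_singleton_eq h' hc
      obtain ⟨t₁, t₂, htl, rfl, rfl⟩ := List.map_eq_append_iff.1 hta
      obtain ⟨s₁, s₂, hsl, hs₁, rfl⟩ := List.map_eq_append_iff.1 hsc
      obtain rfl := (List.map_injective_iff.2 Sum.inl_injective) hs₁
      obtain ⟨rfl, rfl⟩ := hT.eq_nil_of_toList_eq t.2 s.2 htl hsl (by simpa using hb)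
      obtain rfl : t = s := Subtype.ext (FreeMonoid.toList.injective (by rw [htl, hsl]; simp))
      rfl

theorem Step.toAdjInv_eq {u v : List (X ⊕ T)} (h : Step T u v) : toAdjInv T u = toAdjInv T v := by
  obtain ⟨p, l, q, hl, rfl, rfl⟩ := h
  simp only [toAdjInv_append, hl.toAdjInv_eq_one, mul_one]

theorem toAdjInv_eq_of_reflTransGen {u v : List (X ⊕ T)} (h : ReflTransGen (Step T) u v) :
    toAdjInv T u = toAdjInv T v := by
  induction h with
  | refl => rfl
  | tail _ hvw ih => exact ih.trans hvw.toAdjInv_eq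

theorem Step.length_lt {u v : List (X ⊕ T)} (h : Step T u v) : v.length < u.length := by
  obtain ⟨p, l, q, hl, rfl, rfl⟩ := h
  have := List.length_pos_iff.2 hl.ne_nil
  simp only [List.length_append]
  omega

theorem Step.append_left {u v : List (X ⊕ T)} (h : Step T u v) (w : List (X ⊕ T)) :
    Step T (w ++ u) (w ++ v) := by
  obtain ⟨p, l, q, hl, rfl, rfl⟩ := h
  exact ⟨w ++ p, l, q, hl, by simp, by simp⟩

theorem Step.append_right {u v : List (X ⊕ T)} (h : Step T u v) (w : List (X ⊕ T)) :
    Step T (u ++ w) (v ++ w) := by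
  obtain ⟨p, l, q, hl, rfl, rfl⟩ := h
  exact ⟨p, l, q ++ w, hl, by simp, by simp⟩

theorem reflTransGen_append {u u' v v' : List (X ⊕ T)} (hu : ReflTransGen (Step T) u u')
    (hv : ReflTransGen (Step T) v v') : ReflTransGen (Step T) (u ++ v) (u' ++ v') :=
  (ReflTransGen.lift (· ++ v) (fun _ _ h => h.append_right v) _ _ hu).trans
    (ReflTransGen.lift (u' ++ ·) (fun _ _ h => h.append_left u') _ _ hv)

theorem exists_reflTransGen_isNormal (u : List (X ⊕ T)) :
    ∃ v, ReflTransGen (Step T) u v ∧ IsNormal T v := by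
  induction hn : u.length using Nat.strong_induction_on generalizing u with
  | _ n ih =>
    by_cases hu : IsNormal T u
    · exact ⟨u, .refl, hu⟩
    · obtain ⟨v, huv⟩ := not_forall_not.1 hu
      obtain ⟨w, hvw, hw⟩ := ih _ (hn ▸ huv.length_lt) v rfl
      exact ⟨w, .head huv hvw, hw⟩

theorem isNormal_nil : IsNormal T [] := by
  rintro _ ⟨p, l, q, hl, h, -⟩
  exact hl.ne_nil (List.append_eq_nil_iff.1 (List.append_eq_nil_iff.1 h.symm).1).2

theorem isNormal_word (w : FreeMonoid X) : IsNormal T (word T w) := by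
  rintro _ ⟨p, l, q, hl, h, -⟩
  obtain ⟨s, hs⟩ := hl.exists_inr_mem
  exact inr_notMem_word s w (by simp [h, hs])

theorem IsNormal.right {u v : List (X ⊕ T)} (h : IsNormal T (u ++ v)) : IsNormal T v :=
  fun _ hv => h _ (hv.append_left u)

theorem IsNormal.eq_of_reflTransGen {u v : List (X ⊕ T)} (hu : IsNormal T u)
    (h : ReflTransGen (Step T) u v) : v = u := by
  rcases h.cases_head with rfl | ⟨w, huw, -⟩
  exacts [rfl, absurd huw (hu w)]

/-- Critical pairs, with the second redex starting `m` letters after the first. -/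
theorem joinable_of_append_eq (hT : OverlapFree T) {l l' p q m q' : List (X ⊕ T)}
    (hl : IsRule T l) (hl' : IsRule T l') (h : l ++ q = m ++ (l' ++ q')) :
    ∃ x, ReflGen (Step T) (p ++ q) x ∧ ReflGen (Step T) (p ++ m ++ q') x := by
  rcases List.append_eq_append_iff.1 h with ⟨d, rfl, rfl⟩ | ⟨d, rfl, hd⟩
  · exact ⟨p ++ d ++ q', .single ⟨p ++ d, l', q', hl', by simp, rfl⟩,
      .single ⟨p, l, d ++ q', hl, by simp, by simp⟩⟩
  rcases List.append_eq_append_iff.1 hd with ⟨e, rfl, rfl⟩ | ⟨e, rfl, rfl⟩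
  · obtain ⟨rfl, rfl⟩ := hl.eq_nil_of_eq_append hl' (List.append_assoc _ _ _).symm
    exact ⟨p ++ q, .refl, by simpa using .refl⟩
  by_cases hd : d = []
  · subst hd
    exact ⟨p ++ q', .single ⟨p, _, q', hl', by simp, rfl⟩, .single ⟨p, _, q', hl, by simp, rfl⟩⟩
  · rw [hl.eq_of_overlap hT hl' rfl rfl hd]
    exact ⟨p ++ e ++ q', by simpa using .refl, .refl⟩

theorem Step.joinable (hT : OverlapFree T) {u v w : List (X ⊕ T)} (hv : Step T u v)
    (hw : Step T u w) : ∃ x, ReflGen (Step T) v x ∧ ReflGen (Step T) w x := by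
  obtain ⟨p, l, q, hl, rfl, rfl⟩ := hv
  obtain ⟨p', l', q', hl', h, rfl⟩ := hw
  simp only [List.append_assoc] at h
  rcases List.append_eq_append_iff.1 h with ⟨m, rfl, hm⟩ | ⟨m, rfl, hm⟩
  · simpa using joinable_of_append_eq hT hl hl' hm
  · obtain ⟨x, hx, hx'⟩ := joinable_of_append_eq (p := p') hT hl' hl hm
    exact ⟨x, by simpa using hx', hx⟩

/-- Joinability is transitive by the Church–Rosser property of the locally confluent system. -/
def joinCon (hT : OverlapFree T) : Con (FreeMonoid (X ⊕ T)) where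
  r u v := Join (ReflTransGen (Step T)) u.toList v.toList
  iseqv := by
    have := equivalence_join_reflTransGen (r := Step T) fun _ _ _ hb hc =>
      (Step.joinable hT hb hc).imp fun _ h => ⟨h.1, h.2.to_reflTransGen⟩
    exact ⟨fun _ => this.refl _, this.symm, this.trans⟩
  mul' := fun ⟨c, hac, hbc⟩ ⟨d, had, hbd⟩ =>
    ⟨c ++ d, reflTransGen_append hac had, reflTransGen_append hbc hbd⟩

theorem invCon_le_joinCon (hT : OverlapFree T) : invCon T ≤ joinCon hT :=
  Con.conGen_le.2 <| by
    rintro _ _ (⟨t⟩ | ⟨t⟩)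
    · exact ⟨[], .single ⟨[], _, [], .mul_inv t, by simp [emb, igen, word], rfl⟩, .refl⟩
    · exact ⟨[], .single ⟨[], _, [], .inv_mul t, by simp [emb, igen, word], rfl⟩, .refl⟩

theorem IsNormal.eq_nil_of_toAdjInv_eq_one (hT : OverlapFree T) {u : List (X ⊕ T)}
    (hu : IsNormal T u) (h : toAdjInv T u = 1) : u = [] := by
  obtain ⟨c, huc, hc⟩ := invCon_le_joinCon hT ((Con.eq _).1 h)
  obtain rfl := isNormal_nil.eq_of_reflTransGen hc
  exact (hu.eq_of_reflTransGen huc).symm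

theorem IsNormal.exists_of_append_eq {u z p l q : List (X ⊕ T)} (hu : IsNormal T u)
    (hz : IsNormal T z) (hl : IsRule T l) (h : u ++ z = p ++ l ++ q) :
    ∃ a b, a ≠ [] ∧ b ≠ [] ∧ u = p ++ a ∧ z = b ++ q ∧ l = a ++ b := by
  rw [List.append_assoc] at h
  rcases List.append_eq_append_iff.1 h with ⟨a, -, rfl⟩ | ⟨a, rfl, hlq⟩
  · exact absurd ⟨a, l, q, hl, by simp, rfl⟩ (hz _)
  rcases List.append_eq_append_iff.1 hlq with ⟨b, rfl, -⟩ | ⟨b, rfl, rfl⟩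
  · exact absurd ⟨p, l, b, hl, by simp, rfl⟩ (hu _)
  refine ⟨a, b, ?_, ?_, rfl, rfl, rfl⟩
  · rintro rfl
    exact hz _ ⟨[], b, q, by simpa using hl, by simp, rfl⟩
  · rintro rfl
    exact hu _ ⟨p, a, [], by simpa using hl, by simp, rfl⟩

theorem IsRule.exists_of_eq_map_inl_append {l b : List (X ⊕ T)} {a : List X} (hl : IsRule T l)
    (h : l = a.map Sum.inl ++ b) (ha : a ≠ []) (hb : b ≠ []) :
    ∃ t : T, ∃ c, (t : FreeMonoid X).toList = a ++ c ∧ b = c.map Sum.inl ++ [Sum.inr t] := by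
  cases hl with
  | mul_inv t =>
    obtain ⟨b₀, hb₀, rfl⟩ := List.eq_append_of_append_singleton_eq h hb
    obtain ⟨a', c, htl, ha', rfl⟩ := List.map_eq_append_iff.1 hb₀
    obtain rfl := (List.map_injective_iff.2 Sum.inl_injective) ha'
    exact ⟨t, c, htl, rfl⟩
  | inv_mul t =>
    cases a with
    | nil => exact absurd rfl ha
    | cons x a => simp at h

/-- The only letter `i(t)` of `c i(t) a` has fewer than `|t|` letters on either side. -/
theorem isNormal_map_inl_append_inr_cons {t : T} {a c : List X}
    (h : (t : FreeMonoid X).toList = a ++ c) (ha : a ≠ []) (hc : c ≠ []) :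
    IsNormal T (c.map Sum.inl ++ Sum.inr t :: a.map Sum.inl) := by
  have hlen : (t : FreeMonoid X).length = a.length + c.length := by
    simp [FreeMonoid.length, h]
  have ha' := List.length_pos_iff.2 ha
  have hc' := List.length_pos_iff.2 hc
  rintro _ ⟨p, l, q, hl, heq, -⟩
  cases hl with
  | mul_inv s =>
    rw [show p ++ (word T s ++ [Sum.inr s]) ++ q = p ++ word T s ++ Sum.inr s :: q by simp] at heq
    obtain ⟨hcs, hts, -⟩ := List.eq_of_append_cons_eq (by simp) (by simp) heq
    obtain rfl := Sum.inr_injective hts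
    have := congrArg List.length hcs
    simp only [List.length_map, List.length_append, length_word] at this
    omega
  | inv_mul s =>
    rw [show p ++ (Sum.inr s :: word T s) ++ q = p ++ Sum.inr s :: (word T s ++ q) by simp] at heq
    obtain ⟨-, hts, has⟩ := List.eq_of_append_cons_eq (by simp) (by simp) heq
    obtain rfl := Sum.inr_injective hts
    have := congrArg List.length has
    simp only [List.length_map, List.length_append, length_word] at this
    omega

/-- If `w ∈ ⟨X⟩` has an inverse in `⟨X : i(T)⟩` represented by a normal word `z`, a redex of
`w z` straddles the junction; it must be `t i(t)` with `t` a suffix of `w`, since otherwise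
a nonempty normal word would represent `1`. Cancelling it leaves the same situation for `w t⁻¹`. -/
theorem mem_closure_of_toAdjInv_eq_one (hT : OverlapFree T) (w : FreeMonoid X)
    {z : List (X ⊕ T)} (hz : IsNormal T z) (hwz : toAdjInv T (word T w ++ z) = 1)
    (hzw : toAdjInv T (z ++ word T w) = 1) : w ∈ Submonoid.closure T := by
  induction hn : w.length using Nat.strong_induction_on generalizing w z with
  | _ n ih =>
  by_cases hw : w = 1
  · exact hw ▸ one_mem _
  have hred : ¬IsNormal T (word T w ++ z) := fun h => hw <| FreeMonoid.toList.injective <|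
    List.map_eq_nil_iff.1 (List.append_eq_nil_iff.1 (h.eq_nil_of_toAdjInv_eq_one hT hwz)).1
  obtain ⟨_, p, l, q, hl, h, -⟩ := not_forall_not.1 hred
  obtain ⟨a, b, ha, hb, hpa, rfl, rfl⟩ := (isNormal_word w).exists_of_append_eq hz hl h
  rw [hpa] at hwz hzw
  simp only [toAdjInv_append] at hwz hzw
  obtain ⟨hpq, hqp, hba⟩ := mul_eq_one_of_mul_mul_mul_eq_one
    (by rw [← toAdjInv_append]; exact hl.toAdjInv_eq_one) hwz hzw
  rw [← toAdjInv_append] at hpq hqp hba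
  obtain ⟨p₀, a₀, hw₀, rfl, rfl⟩ := List.map_eq_append_iff.1 hpa
  have ha₀ : a₀ ≠ [] := by simpa using ha
  obtain ⟨t, c, htc, rfl⟩ := hl.exists_of_eq_map_inl_append rfl ha₀ hb
  obtain rfl : c = [] := by
    by_contra hc
    have := (isNormal_map_inl_append_inr_cons htc ha₀ hc).eq_nil_of_toAdjInv_eq_one hT
      (by simpa using hba)
    simp at this
  obtain rfl : w = FreeMonoid.ofList p₀ * t := FreeMonoid.toList.injective (by simp [hw₀, htc])
  have hlen : (FreeMonoid.ofList p₀).length < n := by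
    rw [← hn, FreeMonoid.length_mul]
    exact Nat.lt_add_of_pos_right
      (by simpa [FreeMonoid.length, htc] using List.length_pos_iff.2 ha₀)
  exact mul_mem (ih _ hlen _ hz.right hpq hqp rfl) (Submonoid.subset_closure t.2)

theorem mem_closure_of_isUnit_natHom (hT : OverlapFree T) {w : FreeMonoid X}
    (hw : IsUnit (natHom T w)) : w ∈ Submonoid.closure T := by
  obtain ⟨y, hwy, hyw⟩ := isUnit_iff_exists.1 hw
  obtain ⟨z₀, rfl⟩ := (invCon T).mk'_surjective y
  obtain ⟨z, hz₀z, hz⟩ := exists_reflTransGen_isNormal (T := T) (FreeMonoid.toList z₀)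
  have hz₀ : (invCon T).mk' z₀ = toAdjInv T z := toAdjInv_eq_of_reflTransGen hz₀z
  rw [hz₀, natHom_eq_toAdjInv, ← toAdjInv_append] at hwy hyw
  exact mem_closure_of_toAdjInv_eq_one hT w hz hwy hyw

end Rewriting

/-- for an arbitrary `S` there is exactly one overlap-free subset of
`⟨X⟩ \ {1}` inverse-equivalent to `S`, namely the described set `D`. -/
theorem stmt17 (X : Type*) (S : Set (FreeMonoid X)) (D : Set (FreeMonoid X))
    (hD : D = {w : FreeMonoid X | w ≠ 1 ∧ IsUnit (natHom S w) ∧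
      ¬∃ u v : FreeMonoid X, u ≠ 1 ∧ v ≠ 1 ∧
        IsUnit (natHom S u) ∧ IsUnit (natHom S v) ∧ w = u * v}) :
    ((1 : FreeMonoid X) ∉ D ∧ OverlapFree D ∧ InvEquiv S D) ∧
    ∀ T : Set (FreeMonoid X),
      (1 : FreeMonoid X) ∉ T → OverlapFree T → InvEquiv S T → T = D := by
  change D = indecomposableUnits (natHom S) at hD
  subst hD
  have hS : ∀ s ∈ S, IsUnit (natHom (indecomposableUnits (natHom S)) s) := fun _ hs =>
    isUnit_of_mem_closure (fun _ => isUnit_natHom_of_mem)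
      (mem_closure_indecomposableUnits (isUnit_natHom_of_mem hs))
  refine ⟨⟨fun h => h.1 rfl, overlapFree_indecomposableUnits, fun _ hw => hw.2.1, hS⟩, ?_⟩
  rintro T h1 hT ⟨hTS, hST⟩
  exact eq_indecomposableUnits h1 hT hTS fun _ hw =>
    mem_closure_of_isUnit_natHom hT (isUnit_natHom_of_isUnit hST hw)

end AdjoinInverses
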